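/- For n ≥ 1, if b is a border of M_{2n+2}, then the word obtained from φ(b) by deleting its first letter (which is 0) is a border of M_{2n+3}. -/

import Mathlib

/-- The Fibonacci morphism: `false` (=0) ↦ 01, `true` (=1) ↦ 0. -/
def phi (w : List Bool) : List Bool :=
  w.flatMap (fun b => if b then [false] else [false, true])

/-- The Fibonacci words: f₁ = 1, f₂ = 0, f_{n+2} = f_{n+1} f_n. -/
def fw : ℕ → List Bool
  | 0 => []
  | 1 => [true]
  | 2 => [false]
  | (n+3) => fw (n+2) ++ fw (n+1)

/-- Palindromic prefix: f_n with its last two letters removed. -/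
def pw (n : ℕ) : List Bool := (fw n).dropLast.dropLast

/-- Minimal forbidden words of the Fibonacci word:
`M_{2n+1} = 1 p_{2n+1} 1`, `M_{2n+2} = 0 p_{2n+2} 0`. -/
def Mw (n : ℕ) : List Bool :=
  if n % 2 = 0 then false :: (pw n ++ [false]) else true :: (pw n ++ [true])

/-- Correlation bit: `corr u v k` holds iff `C_{u,v}[k] = 1`. -/
def corr {α : Type*} (u v : List α) (k : ℕ) : Prop :=
  ∀ i j : ℕ, i < u.length → j < v.length → i = j + k → u[i]? = v[j]?

/-- A border of a word is both a prefix and a suffix. -/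
def IsBorder {α : Type*} (b w : List α) : Prop := b <+: w ∧ b <:+ w

/-- The set of nonempty borders of `M_n`. -/
def Bset (n : ℕ) : Set (List Bool) := {b | b ≠ [] ∧ IsBorder b (Mw n)}

open scoped Classical in
/-- The correlation polynomial `C_{u,v}(z) = ∑_{k<|u|} C_{u,v}[k] z^{|u|-1-k}`. -/
noncomputable def corrPoly (u v : List Bool) : Polynomial ℤ :=
  ∑ k ∈ Finset.range u.length,
    if corr u v k then Polynomial.X ^ (u.length - 1 - k) else 0

open scoped Classical in
/-- The nonempty borders of `w`, as a finset. -/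
noncomputable def borderFinset (w : List Bool) : Finset (List Bool) :=
  ((Finset.range (w.length + 1)).image (fun k => w.take k)).filter
    (fun b => b ≠ [] ∧ b <:+ w)

/-!
Since `φ` is a morphism, it maps borders of `M_{2n+2}` to borders of `φ(M_{2n+2})`, and deleting
the first letter of a prefix (suffix) of `u` gives a prefix (suffix) of `u` minus its first letter.
So it suffices that `φ(M_{2n+2}) = 0 M_{2n+3}`. This follows from `φ(f_k) = f_{k+1}`: the Fibonacci
words of odd index `≥ 3` end in `01` and those of even index `≥ 4` end in `10`, so
`φ(p_{2n+2}) 0 01 = φ(p_{2n+2} 10) = f_{2n+3} = p_{2n+3} 01`, i.e. `p_{2n+3} = φ(p_{2n+2}) 0`, and then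
`φ(0 p_{2n+2} 0) = 01 φ(p_{2n+2}) 01 = 0 (1 p_{2n+3} 1)`.
-/

theorem List.IsPrefix.tail {α : Type*} {l₁ l₂ : List α} (h : l₁ <+: l₂) :
    l₁.tail <+: l₂.tail := by
  obtain ⟨t, rfl⟩ := h
  cases l₁ with
  | nil => exact List.nil_prefix
  | cons a l => exact List.prefix_append l t

theorem List.IsSuffix.tail {α : Type*} {l₁ l₂ : List α} (h : l₁ <:+ l₂) :
    l₁.tail <:+ l₂.tail := by
  obtain ⟨t, rfl⟩ := h
  cases t with
  | nil => exact List.suffix_refl _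
  | cons a t => exact (List.tail_suffix l₁).trans (List.suffix_append t l₁)

namespace IsBorder

variable {α β : Type*} {b w : List α}

theorem tail (h : IsBorder b w) : IsBorder b.tail w.tail :=
  ⟨h.1.tail, h.2.tail⟩

theorem flatMap (h : IsBorder b w) (f : α → List β) :
    IsBorder (b.flatMap f) (w.flatMap f) :=
  ⟨h.1.flatMap f, h.2.flatMap f⟩

end IsBorder

theorem phi_append (u v : List Bool) : phi (u ++ v) = phi u ++ phi v :=
  List.flatMap_append

theorem phi_fw : ∀ k, phi (fw (k + 1)) = fw (k + 2)
  | 0 => rfl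
  | 1 => rfl
  | k + 2 => by
    change phi (fw (k + 2) ++ fw (k + 1)) = fw (k + 3) ++ fw (k + 2)
    rw [phi_append, phi_fw (k + 1), phi_fw k]

theorem fw_suffix_fw_add_two : ∀ k, fw k <:+ fw (k + 2)
  | 0 => List.nil_suffix
  | k + 1 => List.suffix_append (fw (k + 2)) (fw (k + 1))

theorem fw_suffix_fw_add_two_mul (k : ℕ) : ∀ j, fw k <:+ fw (k + 2 * j)
  | 0 => List.suffix_refl _
  | j + 1 => (fw_suffix_fw_add_two_mul k j).trans (fw_suffix_fw_add_two (k + 2 * j))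

theorem pw_append_of_suffix {k : ℕ} {a c : Bool} (h : [a, c] <:+ fw k) :
    pw k ++ [a, c] = fw k := by
  obtain ⟨u, hu⟩ := h
  rw [pw, ← hu]
  simp

theorem pw_append_odd (n : ℕ) : pw (2 * n + 3) ++ [false, true] = fw (2 * n + 3) :=
  pw_append_of_suffix <| by
    rw [add_comm]
    exact fw_suffix_fw_add_two_mul 3 n

theorem pw_append_even (n : ℕ) : pw (2 * n + 4) ++ [true, false] = fw (2 * n + 4) :=
  pw_append_of_suffix <| by
    rw [add_comm]
    exact List.IsSuffix.trans ⟨[false], rfl⟩ (fw_suffix_fw_add_two_mul 4 n)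

theorem phi_pw_even (n : ℕ) : phi (pw (2 * n + 4)) ++ [false] = pw (2 * n + 5) := by
  have h : phi (fw (2 * n + 4)) = fw (2 * (n + 1) + 3) := phi_fw _
  rw [← pw_append_even, phi_append, ← pw_append_odd (n + 1)] at h
  have h' : phi (pw (2 * n + 4)) ++ [false] ++ [false, true] =
      pw (2 * (n + 1) + 3) ++ [false, true] := by
    simpa [phi] using h
  exact List.append_cancel_right h'

theorem phi_Mw_even (n : ℕ) : phi (Mw (2 * n + 4)) = false :: Mw (2 * n + 5) := by
  rw [Mw, Mw, if_pos (by omega), if_neg (by omega)]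
  simp [← phi_pw_even n, phi]

theorem stmt11 (n : ℕ) (hn : 1 ≤ n) (b : List Bool) (hb : IsBorder b (Mw (2*n+2))) :
    IsBorder ((phi b).tail) (Mw (2*n+3)) := by
  obtain ⟨m, rfl⟩ := Nat.exists_eq_add_of_le' hn
  have h : IsBorder (phi b) (phi (Mw (2 * m + 4))) := hb.flatMap _
  rw [phi_Mw_even] at h
  exact h.tail
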